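/- arXiv:0710.0655 — 11 statements merged into one kernel-verified Lean document; each statement's English description precedes it below -/
import Mathlib

section
/- Let V be a finite type and E : V → V → Prop a directed graph whose transitive closure is irreflexive (i.e., the graph is acyclic). Let w : V → ℝ be nonnegative vertex weights and let D ≥ 1 be a natural number such that every vertex has at most D in-neighbors, i.e., for every v the set {u | E u v} has cardinality at most D. Let V' be the set of vertices with no out-neighbors (sinks). Assume that for every vertex v not in V', 2·D·w(v) ≤ Σ_{u with E v u} w(u). Then Σ_{v ∈ V} w(v) ≤ 2 · Σ_{v ∈ V'} w(v). -/
/-!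
Summing the growth condition over the non-sinks, and counting each vertex at most `D` times as an
out-neighbour, gives `2 D · w(non-sinks) ≤ D · w(V)`: the non-sinks carry at most half the weight.
-/

open Finset

theorem sum_sum_outNeighbors_le_mul_sum_of_inDegree_le {V : Type*} [Fintype V]
    (E : V → V → Prop) [DecidableRel E] {R : Type*} [CommSemiring R] [PartialOrder R]
    [IsOrderedRing R] (s : Finset V) {w : V → R}
    (hw : ∀ v, 0 ≤ w v) {D : ℕ} (hindeg : ∀ v, #(univ.filter (E · v)) ≤ D) :
    ∑ v ∈ s, ∑ u ∈ univ.filter (E v), w u ≤ D * ∑ u, w u := by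
  calc ∑ v ∈ s, ∑ u ∈ univ.filter (E v), w u
      = ∑ u, ∑ v ∈ s.filter (E · u), w u := by
        simp only [sum_filter]
        exact sum_comm
    _ = ∑ u, #(s.filter (E · u)) * w u := by simp only [sum_const, nsmul_eq_mul]
    _ ≤ ∑ u, D * w u := by
        gcongr with u
        · exact hw u
        · exact (card_le_card (filter_subset_filter _ (subset_univ s))).trans (hindeg u)
    _ = D * ∑ u, w u := (mul_sum _ _ _).symm

theorem two_mul_sum_nonsinks_le_sum {V : Type*} [Fintype V] (E : V → V → Prop)
    [DecidableRel E] {K : Type*} [CommSemiring K] [LinearOrder K] [IsStrictOrderedRing K]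
    {w : V → K} (hw : ∀ v, 0 ≤ w v) {D : ℕ} (hD : 0 < D)
    (hindeg : ∀ v, #(univ.filter (E · v)) ≤ D)
    (hgrow : ∀ v, (∃ u, E v u) → 2 * (D : K) * w v ≤ ∑ u ∈ univ.filter (E v), w u) :
    2 * ∑ v ∈ univ.filter (fun v => ∃ u, E v u), w v ≤ ∑ v, w v := by
  have hsum : (D : K) * (2 * ∑ v ∈ univ.filter (fun v => ∃ u, E v u), w v) ≤ D * ∑ v, w v :=
    calc (D : K) * (2 * ∑ v ∈ univ.filter (fun v => ∃ u, E v u), w v)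
        = ∑ v ∈ univ.filter (fun v => ∃ u, E v u), 2 * (D : K) * w v := by
          rw [mul_sum, mul_sum]
          exact sum_congr rfl fun _ _ => by ring
      _ ≤ ∑ v ∈ univ.filter (fun v => ∃ u, E v u), ∑ u ∈ univ.filter (E v), w u :=
          sum_le_sum fun v hv => hgrow v (mem_filter.1 hv).2
      _ ≤ D * ∑ v, w v := sum_sum_outNeighbors_le_mul_sum_of_inDegree_le E _ hw hindeg
  exact le_of_mul_le_mul_left hsum (Nat.cast_pos.2 hD)

theorem dag_sink_weight_general (V : Type*) [Fintype V] (E : V → V → Prop) [DecidableRel E]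
    (w : V → ℝ) (hw : ∀ v, 0 ≤ w v)
    (D : ℕ) (hD : 1 ≤ D)
    (hindeg : ∀ v : V, (Finset.univ.filter (fun u => E u v)).card ≤ D)
    (hgrow : ∀ v : V, (∃ u, E v u) →
      2 * (D : ℝ) * w v ≤ ∑ u ∈ Finset.univ.filter (fun u => E v u), w u) :
    ∑ v, w v ≤ 2 * ∑ v ∈ Finset.univ.filter (fun v => ∀ u, ¬ E v u), w v := by
  have hsplit := sum_filter_add_sum_filter_not univ (fun v => ∀ u, ¬ E v u) w
  simp only [not_forall, not_not] at hsplit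
  have hnonsinks := two_mul_sum_nonsinks_le_sum E hw hD hindeg hgrow
  linarith

/-- In a finite directed acyclic graph with nonnegative vertex weights, if every
vertex has at most `D` in-neighbors and the weight of every non-sink vertex is at
most a `1/(2D)` fraction of the total weight of its out-neighbors, then the total
weight of the sinks is at least half the total weight. -/
theorem dag_sink_weight (V : Type*) [Fintype V] (E : V → V → Prop) [DecidableRel E]
    (hacyc : Irreflexive (Relation.TransGen E))
    (w : V → ℝ) (hw : ∀ v, 0 ≤ w v)
    (D : ℕ) (hD : 1 ≤ D)
    (hindeg : ∀ v : V, (Finset.univ.filter (fun u => E u v)).card ≤ D)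
    (hgrow : ∀ v : V, (∃ u, E v u) →
      2 * (D : ℝ) * w v ≤ ∑ u ∈ Finset.univ.filter (fun u => E v u), w u) :
    ∑ v, w v ≤ 2 * ∑ v ∈ Finset.univ.filter (fun v => ∀ u, ¬ E v u), w v :=
  dag_sink_weight_general V E w hw D hD hindeg hgrow
end

section
/- Let X, Y be n×n real matrices and X', Y' be m×m real matrices. If the four matrices X − Y, X + Y, X' − Y', and X' + Y' are all positive semidefinite, then the Kronecker product difference X ⊗ X' − Y ⊗ Y' is positive semidefinite. -/
/- Over a commutative ring,
`2 • (X ⊗ X' - Y ⊗ Y') = (X - Y) ⊗ (X' + Y') + (X + Y) ⊗ (X' - Y')`, and the right-hand side is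
a sum of Kronecker products of positive semidefinite matrices. -/

open Matrix
open scoped Kronecker ComplexOrder

theorem Matrix.two_smul_kronecker_sub_kronecker {R l m n p : Type*} [CommRing R]
    (X Y : Matrix l m R) (X' Y' : Matrix n p R) :
    (2 : R) • (X ⊗ₖ X' - Y ⊗ₖ Y') = (X - Y) ⊗ₖ (X' + Y') + (X + Y) ⊗ₖ (X' - Y') := by
  ext ⟨i, j⟩ ⟨k, q⟩
  simp only [smul_apply, sub_apply, add_apply, kronecker_apply, smul_eq_mul]
  ring

theorem Matrix.PosSemidef.kronecker_sub_kronecker {𝕜 n m : Type*} [RCLike 𝕜] [Finite n]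
    [Finite m] {X Y : Matrix n n 𝕜} {X' Y' : Matrix m m 𝕜}
    (h1 : (X - Y).PosSemidef) (h2 : (X + Y).PosSemidef)
    (h3 : (X' - Y').PosSemidef) (h4 : (X' + Y').PosSemidef) :
    (X ⊗ₖ X' - Y ⊗ₖ Y').PosSemidef := by
  have h_two_smul : ((2 : 𝕜) • (X ⊗ₖ X' - Y ⊗ₖ Y')).PosSemidef := by
    rw [two_smul_kronecker_sub_kronecker]
    exact (h1.kronecker h4).add (h2.kronecker h3)
  have h_half : (0 : 𝕜) ≤ 2⁻¹ := by positivity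
  simpa [smul_smul] using h_two_smul.smul h_half

/-- If `X − Y`, `X + Y`, `X' − Y'`, and `X' + Y'` are all positive semidefinite, then
the Kronecker product difference `X ⊗ X' − Y ⊗ Y'` is positive semidefinite. -/
theorem kronecker_psd_of_psd (n m : ℕ)
    (X Y : Matrix (Fin n) (Fin n) ℝ) (X' Y' : Matrix (Fin m) (Fin m) ℝ)
    (h1 : (X - Y).PosSemidef) (h2 : (X + Y).PosSemidef)
    (h3 : (X' - Y').PosSemidef) (h4 : (X' + Y').PosSemidef) :
    (X ⊗ₖ X' - Y ⊗ₖ Y').PosSemidef :=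
  h1.kronecker_sub_kronecker h2 h3 h4
end

section
/- Let k ≥ 1 and n ≥ 1, let ε ≥ 0, and let u, v : Fin k → EuclideanSpace ℝ (Fin n) be families of nonzero vectors with Σᵢ ‖u i‖² = 1 and Σᵢ ‖v i‖² = 1. If Σᵢ ⟨u i, v i⟩ ≥ 1 − ε, then Σᵢ ⟨u i, v i⟩² / (‖u i‖ · ‖v i‖) ≥ 1 − 2ε. -/
open scoped RealInnerProductSpace

/-!
Termwise, `a² / b ≥ 2a − b` for `b > 0` (it is `(a − b)² ≥ 0`), and for `a = ⟪u i, v i⟫`,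
`b = ‖u i‖ ‖v i‖` the degenerate case `b = 0` forces `a = 0`. Summing,
`∑ ⟪u i, v i⟫² / (‖u i‖ ‖v i‖) ≥ 2 ∑ ⟪u i, v i⟫ − ∑ ‖u i‖ ‖v i‖`, and the last sum is at most `1`
by Cauchy–Schwarz.
-/

lemma two_mul_sub_le_sq_div {a b : ℝ} (hb : 0 < b) : 2 * a - b ≤ a ^ 2 / b := by
  rw [le_div_iff₀ hb]
  nlinarith [sq_nonneg (a - b)]

lemma two_mul_inner_sub_le_inner_sq_div {E : Type*} [NormedAddCommGroup E]
    [InnerProductSpace ℝ E] (x y : E) :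
    2 * ⟪x, y⟫ - ‖x‖ * ‖y‖ ≤ ⟪x, y⟫ ^ 2 / (‖x‖ * ‖y‖) := by
  rcases (mul_nonneg (norm_nonneg x) (norm_nonneg y)).eq_or_lt with h | h
  · obtain hx | hy := mul_eq_zero.mp h.symm <;> simp_all
  · exact two_mul_sub_le_sq_div h

lemma sum_norm_mul_norm_le_one {ι E : Type*} [SeminormedAddCommGroup E] (s : Finset ι)
    (u v : ι → E) (hu : ∑ i ∈ s, ‖u i‖ ^ 2 = 1) (hv : ∑ i ∈ s, ‖v i‖ ^ 2 = 1) :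
    ∑ i ∈ s, ‖u i‖ * ‖v i‖ ≤ 1 := by
  simpa [hu, hv] using Real.sum_mul_le_sqrt_mul_sqrt s (‖u ·‖) (‖v ·‖)

theorem unique_rounding_psucc2_general (k n : ℕ)
    (ε : ℝ)
    (u v : Fin k → EuclideanSpace ℝ (Fin n))
    (hu : ∑ i, ‖u i‖ ^ 2 = 1) (hv : ∑ i, ‖v i‖ ^ 2 = 1)
    (hsum : ∑ i, ⟪u i, v i⟫ ≥ 1 - ε) :
    ∑ i, ⟪u i, v i⟫ ^ 2 / (‖u i‖ * ‖v i‖) ≥ 1 - 2 * ε := by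
  have htermwise : 2 * ∑ i, ⟪u i, v i⟫ - ∑ i, ‖u i‖ * ‖v i‖
      ≤ ∑ i, ⟪u i, v i⟫ ^ 2 / (‖u i‖ * ‖v i‖) := by
    rw [Finset.mul_sum, ← Finset.sum_sub_distrib]
    exact Finset.sum_le_sum fun i _ ↦ two_mul_inner_sub_le_inner_sq_div (u i) (v i)
  linarith [sum_norm_mul_norm_le_one Finset.univ u v hu hv]

/-- If `u`, `v` are families of nonzero vectors with `∑ ‖u i‖² = ∑ ‖v i‖² = 1` and
`∑ ⟪u i, v i⟫ ≥ 1 − ε`, then `∑ ⟪u i, v i⟫² / (‖u i‖·‖v i‖) ≥ 1 − 2ε`. -/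
theorem unique_rounding_psucc2 (k n : ℕ) (hk : 1 ≤ k) (hn : 1 ≤ n)
    (ε : ℝ) (hε : 0 ≤ ε)
    (u v : Fin k → EuclideanSpace ℝ (Fin n))
    (hu0 : ∀ i, u i ≠ 0) (hv0 : ∀ i, v i ≠ 0)
    (hu : ∑ i, ‖u i‖ ^ 2 = 1) (hv : ∑ i, ‖v i‖ ^ 2 = 1)
    (hsum : ∑ i, ⟪u i, v i⟫ ≥ 1 - ε) :
    ∑ i, ⟪u i, v i⟫ ^ 2 / (‖u i‖ * ‖v i‖) ≥ 1 - 2 * ε :=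
  unique_rounding_psucc2_general k n ε u v hu hv hsum
end

section
/- Let k ≥ 1 and n ≥ 1, let ε ≥ 0, and let u, v : Fin k → EuclideanSpace ℝ (Fin n) satisfy: (a) ⟨u i, u j⟩ = 0 and ⟨v i, v j⟩ = 0 for all i ≠ j; (b) Σᵢ u i = Σᵢ v i = z where ‖z‖ = 1; (c) ⟨u i, v j⟩ ≥ 0 for all i, j; (d) Σᵢ ⟨u i, v i⟩ ≥ 1 − ε. Then (1/2) · Σᵢ |‖u i‖² − ‖v i‖²| ≤ ε. -/
open scoped RealInnerProductSpace

/-!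
Put `g i j = ⟪u i, v j⟫`. By orthogonality, the row sums of this nonnegative matrix are
`‖u i‖²` and its column sums are `‖v j‖²`, while its total mass is `‖z‖² = 1`. For a nonnegative
matrix, a row sum and the matching column sum share the diagonal entry, so they differ by at most
the off-diagonal mass of that row and column; summing over `i` bounds the total discrepancy by
twice the off-diagonal mass `1 - ∑ i, g i i ≤ ε`.
-/

theorem sum_abs_sum_sub_sum_le_two_mul_offDiag {ι : Type*} [Fintype ι] (g : ι → ι → ℝ)
    (hg : ∀ i j, 0 ≤ g i j) :
    ∑ i, |∑ j, g i j - ∑ j, g j i| ≤ 2 * (∑ i, ∑ j, g i j - ∑ i, g i i) := by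
  have hrow : ∀ i, g i i ≤ ∑ j, g i j := fun i =>
    Finset.single_le_sum (fun j _ => hg i j) (Finset.mem_univ i)
  have hcol : ∀ i, g i i ≤ ∑ j, g j i := fun i =>
    Finset.single_le_sum (fun j _ => hg j i) (Finset.mem_univ i)
  calc ∑ i, |∑ j, g i j - ∑ j, g j i|
      ≤ ∑ i, ((∑ j, g i j - g i i) + (∑ j, g j i - g i i)) := by
        refine Finset.sum_le_sum fun i _ => abs_sub_le_iff.2 ⟨?_, ?_⟩ <;>
          linarith [hrow i, hcol i]
    _ = 2 * (∑ i, ∑ j, g i j - ∑ i, g i i) := by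
        simp only [Finset.sum_add_distrib, Finset.sum_sub_distrib]
        rw [Finset.sum_comm (f := fun j i => g j i)]
        ring

section InnerProductSpace

variable {E : Type*} [NormedAddCommGroup E] [InnerProductSpace ℝ E] {ι : Type*} [Fintype ι]

theorem inner_sum_eq_norm_sq_of_pairwise_inner_eq_zero {u : ι → E}
    (hu : ∀ i j, i ≠ j → ⟪u i, u j⟫ = 0) (i : ι) :
    ⟪u i, ∑ j, u j⟫ = ‖u i‖ ^ 2 := by
  rw [inner_sum, Finset.sum_eq_single i (fun j _ hj => hu i j hj.symm) (by simp),
    real_inner_self_eq_norm_sq]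

theorem sum_inner_eq_norm_sq_of_pairwise_inner_eq_zero {v : ι → E}
    (hv : ∀ i j, i ≠ j → ⟪v i, v j⟫ = 0) (i : ι) :
    ⟪∑ j, v j, v i⟫ = ‖v i‖ ^ 2 := by
  rw [real_inner_comm, inner_sum_eq_norm_sq_of_pairwise_inner_eq_zero hv]

end InnerProductSpace

theorem sdp_marginal_difference_general (k n : ℕ)
    (ε : ℝ)
    (u v : Fin k → EuclideanSpace ℝ (Fin n)) (z : EuclideanSpace ℝ (Fin n))
    (huu : ∀ i j, i ≠ j → ⟪u i, u j⟫ = 0)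
    (hvv : ∀ i j, i ≠ j → ⟪v i, v j⟫ = 0)
    (huz : ∑ i, u i = z) (hvz : ∑ i, v i = z) (hz : ‖z‖ = 1)
    (huv : ∀ i j, 0 ≤ ⟪u i, v j⟫)
    (hsum : ∑ i, ⟪u i, v i⟫ ≥ 1 - ε) :
    (1 / 2) * ∑ i, |‖u i‖ ^ 2 - ‖v i‖ ^ 2| ≤ ε := by
  have hrow : ∀ i, ∑ j, ⟪u i, v j⟫ = ‖u i‖ ^ 2 := fun i => by
    rw [← inner_sum, hvz, ← huz, inner_sum_eq_norm_sq_of_pairwise_inner_eq_zero huu]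
  have hcol : ∀ j, ∑ i, ⟪u i, v j⟫ = ‖v j‖ ^ 2 := fun j => by
    rw [← sum_inner, huz, ← hvz, sum_inner_eq_norm_sq_of_pairwise_inner_eq_zero hvv]
  have htotal : ∑ i, ‖u i‖ ^ 2 = 1 := by
    simp_rw [← inner_sum_eq_norm_sq_of_pairwise_inner_eq_zero huu, ← sum_inner, huz,
      real_inner_self_eq_norm_sq, hz, one_pow]
  have hbound := sum_abs_sum_sub_sum_le_two_mul_offDiag (fun i j => ⟪u i, v j⟫) huv
  simp only [hrow, hcol, htotal] at hbound
  linarith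

/-- Under the SDP feasibility constraints of a unique game, if `∑ ⟪u i, v i⟫ ≥ 1 − ε`
then `(1/2)·∑ |‖u i‖² − ‖v i‖²| ≤ ε`. -/
theorem sdp_marginal_difference (k n : ℕ) (hk : 1 ≤ k) (hn : 1 ≤ n)
    (ε : ℝ) (hε : 0 ≤ ε)
    (u v : Fin k → EuclideanSpace ℝ (Fin n)) (z : EuclideanSpace ℝ (Fin n))
    (huu : ∀ i j, i ≠ j → ⟪u i, u j⟫ = 0)
    (hvv : ∀ i j, i ≠ j → ⟪v i, v j⟫ = 0)
    (huz : ∑ i, u i = z) (hvz : ∑ i, v i = z) (hz : ‖z‖ = 1)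
    (huv : ∀ i j, 0 ≤ ⟪u i, v j⟫)
    (hsum : ∑ i, ⟪u i, v i⟫ ≥ 1 - ε) :
    (1 / 2) * ∑ i, |‖u i‖ ^ 2 - ‖v i‖ ^ 2| ≤ ε :=
  sdp_marginal_difference_general k n ε u v z huu hvv huz hvz hz huv hsum
end

section
/- Let k ≥ 1 and n ≥ 1, let ε ≥ 0, and let u, v : Fin k → EuclideanSpace ℝ (Fin n) be families of nonzero vectors satisfying: (a) ⟨u i, u j⟩ = 0 and ⟨v i, v j⟩ = 0 for all i ≠ j; (b) Σᵢ u i = Σᵢ v i = z where ‖z‖ = 1; (c) ⟨u i, v j⟩ ≥ 0 for all i, j; (d) Σᵢ ⟨u i, v i⟩ ≥ 1 − ε. Then Σᵢ (⟨u i, v i⟩² / (‖u i‖² · ‖v i‖²)) · min(‖u i‖², ‖v i‖²) ≥ 1 − 3ε. -/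
/-!
Since `∑ u i = ∑ v i = z` and each family is orthogonal, `⟪u i, z⟫ = ‖u i‖²` and
`⟪z, v i⟫ = ‖v i‖²`; expanding `z` in the other family and using `⟪u i, v j⟫ ≥ 0` gives
`⟪u i, v i⟫ ≤ min (‖u i‖², ‖v i‖²)`, and Pythagoras gives `∑ ‖u i‖² = ∑ ‖v i‖² = 1`.
For `c ≤ min a b` one has `c² / max a b ≥ 2c - max a b ≥ 3c - a - b`, and summing this
termwise bound yields `3(1 - ε) - 1 - 1`.
-/

open scoped RealInnerProductSpace

lemma three_mul_sub_sub_le_sq_div_mul_mul_min {a b c : ℝ} (ha : 0 ≤ a) (hb : 0 ≤ b)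
    (hca : c ≤ a) (hcb : c ≤ b) : 3 * c - a - b ≤ c ^ 2 / (a * b) * min a b := by
  wlog hab : a ≤ b generalizing a b
  · simpa only [mul_comm b a, min_comm b a, sub_right_comm (3 * c) b a] using
      this hb ha hcb hca (le_of_not_ge hab)
  rw [min_eq_left hab]
  rcases ha.eq_or_lt with rfl | ha
  · simp only [mul_zero]
    linarith
  have hb : 0 < b := ha.trans_le hab
  have h_am_gm : 2 * c - b ≤ c ^ 2 / b := by
    rw [le_div_iff₀ hb]
    nlinarith [sq_nonneg (c - b)]
  calc 3 * c - a - b ≤ 2 * c - b := by linarith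
    _ ≤ c ^ 2 / b := h_am_gm
    _ = c ^ 2 / (a * b) * a := by field_simp

section OrthogonalFamily

variable {ι E : Type*} [Fintype ι] [NormedAddCommGroup E] [InnerProductSpace ℝ E]
  {u v : ι → E}

lemma inner_sum_of_pairwise_inner_eq_zero (hu : Pairwise fun i j => ⟪u i, u j⟫ = 0) (i : ι) :
    ⟪u i, ∑ j, u j⟫ = ‖u i‖ ^ 2 := by
  rw [inner_sum, Finset.sum_eq_single i (fun j _ hji => hu hji.symm) (by simp),
    real_inner_self_eq_norm_sq]

lemma sum_norm_sq_of_pairwise_inner_eq_zero (hu : Pairwise fun i j => ⟪u i, u j⟫ = 0) :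
    ∑ i, ‖u i‖ ^ 2 = ‖∑ i, u i‖ ^ 2 := by
  rw [← real_inner_self_eq_norm_sq, sum_inner]
  exact Finset.sum_congr rfl fun i _ => (inner_sum_of_pairwise_inner_eq_zero hu i).symm

lemma inner_le_norm_sq_of_sum_eq (hu : Pairwise fun i j => ⟪u i, u j⟫ = 0)
    (huv : ∑ j, u j = ∑ j, v j) (i : ι) (hnonneg : ∀ j, 0 ≤ ⟪u i, v j⟫) :
    ⟪u i, v i⟫ ≤ ‖u i‖ ^ 2 := by
  rw [← inner_sum_of_pairwise_inner_eq_zero hu i, huv, inner_sum]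
  exact Finset.single_le_sum (fun j _ => hnonneg j) (Finset.mem_univ i)

end OrthogonalFamily

theorem unique_rounding_psucc_general (k n : ℕ)
    (ε : ℝ)
    (u v : Fin k → EuclideanSpace ℝ (Fin n))
    (z : EuclideanSpace ℝ (Fin n))
    (huu : ∀ i j, i ≠ j → ⟪u i, u j⟫ = 0)
    (hvv : ∀ i j, i ≠ j → ⟪v i, v j⟫ = 0)
    (huz : ∑ i, u i = z) (hvz : ∑ i, v i = z) (hz : ‖z‖ = 1)
    (huv : ∀ i j, 0 ≤ ⟪u i, v j⟫)
    (hsum : ∑ i, ⟪u i, v i⟫ ≥ 1 - ε) :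
    ∑ i, (⟪u i, v i⟫ ^ 2 / (‖u i‖ ^ 2 * ‖v i‖ ^ 2)) * min (‖u i‖ ^ 2) (‖v i‖ ^ 2)
      ≥ 1 - 3 * ε := by
  have hu_one : ∑ i, ‖u i‖ ^ 2 = 1 := by
    rw [sum_norm_sq_of_pairwise_inner_eq_zero huu, huz, hz, one_pow]
  have hv_one : ∑ i, ‖v i‖ ^ 2 = 1 := by
    rw [sum_norm_sq_of_pairwise_inner_eq_zero hvv, hvz, hz, one_pow]
  have hle_u (i) : ⟪u i, v i⟫ ≤ ‖u i‖ ^ 2 :=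
    inner_le_norm_sq_of_sum_eq huu (huz.trans hvz.symm) i (huv i)
  have hle_v (i) : ⟪u i, v i⟫ ≤ ‖v i‖ ^ 2 := by
    rw [real_inner_comm]
    exact inner_le_norm_sq_of_sum_eq hvv (hvz.trans huz.symm) i
      fun j => real_inner_comm (u j) (v i) ▸ huv j i
  calc 1 - 3 * ε ≤ 3 * ∑ i, ⟪u i, v i⟫ - ∑ i, ‖u i‖ ^ 2 - ∑ i, ‖v i‖ ^ 2 := by
        rw [hu_one, hv_one]; linarith
    _ = ∑ i, (3 * ⟪u i, v i⟫ - ‖u i‖ ^ 2 - ‖v i‖ ^ 2) := by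
        rw [Finset.mul_sum, Finset.sum_sub_distrib, Finset.sum_sub_distrib]
    _ ≤ _ := Finset.sum_le_sum fun i _ => three_mul_sub_sub_le_sq_div_mul_mul_min
        (sq_nonneg _) (sq_nonneg _) (hle_u i) (hle_v i)

/-- Under the SDP feasibility constraints of a unique game, if `∑ ⟪u i, v i⟫ ≥ 1 − ε`
then the quantum rounding success quantity
`∑ (⟪u i, v i⟫²/(‖u i‖²·‖v i‖²))·min(‖u i‖², ‖v i‖²)` is at least `1 − 3ε`. -/
theorem unique_rounding_psucc (k n : ℕ) (hk : 1 ≤ k) (hn : 1 ≤ n)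
    (ε : ℝ) (hε : 0 ≤ ε)
    (u v : Fin k → EuclideanSpace ℝ (Fin n))
    (hu0 : ∀ i, u i ≠ 0) (hv0 : ∀ i, v i ≠ 0)
    (z : EuclideanSpace ℝ (Fin n))
    (huu : ∀ i j, i ≠ j → ⟪u i, u j⟫ = 0)
    (hvv : ∀ i j, i ≠ j → ⟪v i, v j⟫ = 0)
    (huz : ∑ i, u i = z) (hvz : ∑ i, v i = z) (hz : ‖z‖ = 1)
    (huv : ∀ i j, 0 ≤ ⟪u i, v j⟫)
    (hsum : ∑ i, ⟪u i, v i⟫ ≥ 1 - ε) :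
    ∑ i, (⟪u i, v i⟫ ^ 2 / (‖u i‖ ^ 2 * ‖v i‖ ^ 2)) * min (‖u i‖ ^ 2) (‖v i‖ ^ 2)
      ≥ 1 - 3 * ε :=
  unique_rounding_psucc_general k n ε u v z huu hvv huz hvz hz huv hsum
end

section
/- Let k ≥ 1 and n ≥ 1, let 0 ≤ ε, and let u, v : Fin k → EuclideanSpace ℝ (Fin n) with ‖u i‖² = 1/k and ‖v i‖² = 1/k for every i, and Σᵢ ⟨u i, v i⟩ ≥ 1 − ε. Set q := k · Σᵢ ⟨u i, v i⟩². Then q ≤ 1 and q/(2 − q) ≥ 1 − 4ε. -/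
open scoped RealInnerProductSpace

/-! Write `aᵢ = ⟪u i, v i⟫`. Cauchy–Schwarz in `E` gives `|aᵢ| ≤ 1/k`, hence `q = k ∑ aᵢ² ≤ 1`;
Cauchy–Schwarz in `ℝᵏ` gives `(∑ aᵢ)² ≤ q`, hence `q ≥ (1 - ε)²`. The function `t ↦ t / (2 - t)`
is increasing on `[0, 1]`, and at `t = (1 - ε)²` it is at least `1 - 4ε`. -/

lemma card_mul_sum_inner_sq_le_one {ι E : Type*} [Fintype ι] [NormedAddCommGroup E]
    [InnerProductSpace ℝ E] (u v : ι → E) (hu : ∀ i, ‖u i‖ ^ 2 = 1 / Fintype.card ι)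
    (hv : ∀ i, ‖v i‖ ^ 2 = 1 / Fintype.card ι) :
    (Fintype.card ι : ℝ) * ∑ i, ⟪u i, v i⟫ ^ 2 ≤ 1 := by
  set c : ℝ := (Fintype.card ι : ℝ)
  have hinner : ∀ i, ⟪u i, v i⟫ ^ 2 ≤ (1 / c) ^ 2 := fun i => by
    calc ⟪u i, v i⟫ ^ 2 = |⟪u i, v i⟫| ^ 2 := (sq_abs _).symm
      _ ≤ (‖u i‖ * ‖v i‖) ^ 2 := by gcongr; exact abs_real_inner_le_norm _ _
      _ = (1 / c) ^ 2 := by rw [mul_pow, hu, hv, sq]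
  calc c * ∑ i, ⟪u i, v i⟫ ^ 2 ≤ c * ∑ _i : ι, (1 / c) ^ 2 :=
        mul_le_mul_of_nonneg_left (Finset.sum_le_sum fun i _ => hinner i) (by positivity)
    _ = (c / c) ^ 2 := by simp only [Finset.sum_const, Finset.card_univ, nsmul_eq_mul]; ring
    _ ≤ 1 := pow_le_one₀ (by positivity) (div_self_le_one c)

lemma one_sub_four_mul_le_div_two_sub {q s ε : ℝ} (hs : s ^ 2 ≤ q) (hq : q ≤ 1)
    (hsε : 1 - ε ≤ s) : 1 - 4 * ε ≤ q / (2 - q) := by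
  have hq0 : 0 ≤ q := (sq_nonneg s).trans hs
  have hden : 0 < 2 - q := by linarith
  rcases le_or_gt (1 - 4 * ε) 0 with hneg | hpos
  · exact hneg.trans (div_nonneg hq0 hden.le)
  · have hεq : (1 - ε) ^ 2 ≤ q := (pow_le_pow_left₀ (by linarith) hsε 2).trans hs
    -- `(1 - ε)² ≤ q ≤ 1` forces `0 ≤ ε`, and `(1 - ε)² / (2 - (1 - ε)²) ≥ 1 - 4ε` for `0 ≤ ε ≤ 5/2`.
    rw [le_div_iff₀ hden]
    nlinarith [sq_nonneg ε]

theorem uniform_unique_game_value_general (k n : ℕ)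
    (ε : ℝ)
    (u v : Fin k → EuclideanSpace ℝ (Fin n))
    (hu : ∀ i, ‖u i‖ ^ 2 = 1 / k) (hv : ∀ i, ‖v i‖ ^ 2 = 1 / k)
    (hsum : ∑ i, ⟪u i, v i⟫ ≥ 1 - ε)
    (q : ℝ) (hq : q = (k : ℝ) * ∑ i, ⟪u i, v i⟫ ^ 2) :
    q ≤ 1 ∧ q / (2 - q) ≥ 1 - 4 * ε := by
  have hq1 : q ≤ 1 := by
    rw [hq]
    simpa using card_mul_sum_inner_sq_le_one u v (by simpa using hu) (by simpa using hv)
  have hcs : (∑ i, ⟪u i, v i⟫) ^ 2 ≤ q := by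
    simpa [hq] using sq_sum_le_card_mul_sum_sq (s := Finset.univ) (f := fun i => ⟪u i, v i⟫)
  exact ⟨hq1, one_sub_four_mul_le_div_two_sub hcs hq1 hsum⟩

/-- (Uniform unique games.) If all vectors have squared norm `1/k` and
`∑ ⟪u i, v i⟫ ≥ 1 − ε`, then the rounding success probability `q/(2 − q)` with
`q = k·∑ ⟪u i, v i⟫²` satisfies `q ≤ 1` and `q/(2 − q) ≥ 1 − 4ε`. -/
theorem uniform_unique_game_value (k n : ℕ) (hk : 1 ≤ k) (hn : 1 ≤ n)
    (ε : ℝ) (hε : 0 ≤ ε)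
    (u v : Fin k → EuclideanSpace ℝ (Fin n))
    (hu : ∀ i, ‖u i‖ ^ 2 = 1 / k) (hv : ∀ i, ‖v i‖ ^ 2 = 1 / k)
    (hsum : ∑ i, ⟪u i, v i⟫ ≥ 1 - ε)
    (q : ℝ) (hq : q = (k : ℝ) * ∑ i, ⟪u i, v i⟫ ^ 2) :
    q ≤ 1 ∧ q / (2 - q) ≥ 1 - 4 * ε :=
  uniform_unique_game_value_general k n ε u v hu hv hsum q hq
end

section
/- Let k ≥ 1 and n ≥ 1, let 0 ≤ ε ≤ 1, and let u, v : Fin k → EuclideanSpace ℝ (Fin n) with Σᵢ ‖u i‖² = 1 and Σᵢ ‖v i‖² = 1. If Σᵢ ⟨u i, v i⟩ ≥ 1 − ε, then (1/2) · Σᵢ |‖u i‖² − ‖v i‖²| ≤ √(2ε). -/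
/-!
Write `Σ |‖uᵢ‖² - ‖vᵢ‖²| = Σ |‖uᵢ‖ - ‖vᵢ‖| (‖uᵢ‖ + ‖vᵢ‖)` and apply Cauchy–Schwarz. The first
factor is at most `√(Σ ‖uᵢ - vᵢ‖²) = √(2 - 2 Σ ⟪uᵢ, vᵢ⟫) ≤ √(2ε)` by the reverse triangle
inequality, and the second at most `√(2 Σ (‖uᵢ‖² + ‖vᵢ‖²)) = 2`.
-/

open scoped RealInnerProductSpace

section

variable {ι E : Type*}

lemma abs_norm_sq_sub_norm_sq_le [SeminormedAddCommGroup E] (x y : E) :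
    |‖x‖ ^ 2 - ‖y‖ ^ 2| ≤ ‖x - y‖ * (‖x‖ + ‖y‖) := by
  rw [sq_sub_sq, abs_mul, abs_of_nonneg (by positivity : 0 ≤ ‖x‖ + ‖y‖), mul_comm]
  exact mul_le_mul_of_nonneg_right (abs_norm_sub_norm_le x y) (by positivity)

lemma sum_abs_norm_sq_sub_norm_sq_le [SeminormedAddCommGroup E] (s : Finset ι) (u v : ι → E) :
    ∑ i ∈ s, |‖u i‖ ^ 2 - ‖v i‖ ^ 2| ≤
      √(∑ i ∈ s, ‖u i - v i‖ ^ 2) * √(∑ i ∈ s, (‖u i‖ + ‖v i‖) ^ 2) :=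
  (Finset.sum_le_sum fun i _ => abs_norm_sq_sub_norm_sq_le (u i) (v i)).trans
    (Real.sum_mul_le_sqrt_mul_sqrt s _ _)

lemma sum_sq_norm_add_norm_le [SeminormedAddCommGroup E] (s : Finset ι) (u v : ι → E) :
    ∑ i ∈ s, (‖u i‖ + ‖v i‖) ^ 2 ≤ 2 * (∑ i ∈ s, ‖u i‖ ^ 2 + ∑ i ∈ s, ‖v i‖ ^ 2) := by
  rw [← Finset.sum_add_distrib, Finset.mul_sum]
  exact Finset.sum_le_sum fun i _ => add_sq_le

lemma sum_norm_sub_sq_real [SeminormedAddCommGroup E] [InnerProductSpace ℝ E] (s : Finset ι)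
    (u v : ι → E) :
    ∑ i ∈ s, ‖u i - v i‖ ^ 2 =
      ∑ i ∈ s, ‖u i‖ ^ 2 - 2 * ∑ i ∈ s, ⟪u i, v i⟫ + ∑ i ∈ s, ‖v i‖ ^ 2 := by
  simp only [norm_sub_sq_real, Finset.sum_add_distrib, Finset.sum_sub_distrib, Finset.mul_sum]

end

theorem bipartite_sdp_marginal_difference_general (k n : ℕ)
    (ε : ℝ)
    (u v : Fin k → EuclideanSpace ℝ (Fin n))
    (hu : ∑ i, ‖u i‖ ^ 2 = 1) (hv : ∑ i, ‖v i‖ ^ 2 = 1)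
    (hsum : ∑ i, ⟪u i, v i⟫ ≥ 1 - ε) :
    (1 / 2) * ∑ i, |‖u i‖ ^ 2 - ‖v i‖ ^ 2| ≤ Real.sqrt (2 * ε) := by
  have hsub : ∑ i, ‖u i - v i‖ ^ 2 ≤ 2 * ε := by
    rw [sum_norm_sub_sq_real, hu, hv]
    linarith
  have hadd : √(∑ i, (‖u i‖ + ‖v i‖) ^ 2) ≤ 2 := by
    rw [Real.sqrt_le_left (by norm_num : (0 : ℝ) ≤ 2)]
    have := sum_sq_norm_add_norm_le Finset.univ u v
    rw [hu, hv] at this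
    linarith
  have := (sum_abs_norm_sq_sub_norm_sq_le Finset.univ u v).trans
    (mul_le_mul (Real.sqrt_le_sqrt hsub) hadd (Real.sqrt_nonneg _) (Real.sqrt_nonneg _))
  linarith

/-- Under only the bipartite SDP constraints `∑ ‖u i‖² = ∑ ‖v i‖² = 1`, if
`∑ ⟪u i, v i⟫ ≥ 1 − ε` then `(1/2)·∑ |‖u i‖² − ‖v i‖²| ≤ √(2ε)`. -/
theorem bipartite_sdp_marginal_difference (k n : ℕ) (hk : 1 ≤ k) (hn : 1 ≤ n)
    (ε : ℝ) (hε0 : 0 ≤ ε) (hε1 : ε ≤ 1)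
    (u v : Fin k → EuclideanSpace ℝ (Fin n))
    (hu : ∑ i, ‖u i‖ ^ 2 = 1) (hv : ∑ i, ‖v i‖ ^ 2 = 1)
    (hsum : ∑ i, ⟪u i, v i⟫ ≥ 1 - ε) :
    (1 / 2) * ∑ i, |‖u i‖ ^ 2 - ‖v i‖ ^ 2| ≤ Real.sqrt (2 * ε) :=
  bipartite_sdp_marginal_difference_general k n ε u v hu hv hsum
end

section
/- Let k ≥ 1 and n ≥ 1, let 0 ≤ ε ≤ 1, and let u, v : Fin k → EuclideanSpace ℝ (Fin n) be families of nonzero vectors with Σᵢ ‖u i‖² = 1 and Σᵢ ‖v i‖² = 1 and Σᵢ ⟨u i, v i⟩ ≥ 1 − ε. Then Σᵢ (⟨u i, v i⟩² / (‖u i‖² · ‖v i‖²)) · min(‖u i‖², ‖v i‖²) ≥ 1 − √(2ε) − 2ε. -/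
/-!
Since `min(a², b²) / (a² b²) = 1 / max(a², b²)`, the quantity to bound is
`∑ ⟪uᵢ, vᵢ⟫² / max(‖uᵢ‖², ‖vᵢ‖²)`. Sedrakyan's inequality bounds it below by
`(∑ ⟪uᵢ, vᵢ⟫)² / ∑ max(‖uᵢ‖², ‖vᵢ‖²) ≥ (1 - ε)² / ∑ max(‖uᵢ‖², ‖vᵢ‖²)`. The denominator is
`1 + ½ ∑ |‖uᵢ‖² - ‖vᵢ‖²|`, and Cauchy–Schwarz applied to `|a² - b²| = |a + b| |a - b|`, together
with `∑ (‖uᵢ‖ ± ‖vᵢ‖)² = 2 ± 2 ∑ ‖uᵢ‖ ‖vᵢ‖` and `∑ ‖uᵢ‖ ‖vᵢ‖ ≥ 1 - ε`, bounds it by `1 + √(2ε)`.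
-/

open Finset
open scoped RealInnerProductSpace

lemma div_mul_min_eq_div_max {α : Type*} [Field α] [LinearOrder α] {x y : α} (hx : x ≠ 0)
    (hy : y ≠ 0) (c : α) : c / (x * y) * min x y = c / max x y := by
  have hmin : min x y ≠ 0 := by rcases min_choice x y with h | h <;> rw [h] <;> assumption
  rw [← min_mul_max x y, mul_comm (min x y), ← div_div, div_mul_cancel₀ _ hmin]

lemma two_mul_max_eq_add_add_abs_sub (x y : ℝ) : 2 * max x y = x + y + |x - y| := by
  linarith [min_add_max x y, max_sub_min_eq_abs x y, abs_sub_comm x y]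

lemma sum_max_sq_le {ι : Type*} [Fintype ι] {a b : ι → ℝ} (ha : ∑ i, a i ^ 2 = 1)
    (hb : ∑ i, b i ^ 2 = 1) :
    ∑ i, max (a i ^ 2) (b i ^ 2) ≤ 1 + √(1 - (∑ i, a i * b i) ^ 2) := by
  set P := ∑ i, a i * b i
  set D := ∑ i, |a i ^ 2 - b i ^ 2|
  have hmax : 2 * ∑ i, max (a i ^ 2) (b i ^ 2) = 2 + D := by
    rw [mul_sum, sum_congr rfl fun i _ => two_mul_max_eq_add_add_abs_sub _ _, sum_add_distrib,
      sum_add_distrib, ha, hb, one_add_one_eq_two]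
  have hD : D ^ 2 ≤ (∑ i, (a i + b i) ^ 2) * ∑ i, (a i - b i) ^ 2 := by
    have := sum_mul_sq_le_sq_mul_sq univ (fun i => |a i + b i|) (fun i => |a i - b i|)
    simpa only [sq_abs, ← abs_mul, ← sq_sub_sq] using this
  have hplus : ∑ i, (a i + b i) ^ 2 = 2 + 2 * P := by
    simp only [add_sq, mul_assoc, sum_add_distrib, ha, hb, P, ← mul_sum]; ring
  have hminus : ∑ i, (a i - b i) ^ 2 = 2 - 2 * P := by
    simp only [sub_sq, mul_assoc, sum_add_distrib, sum_sub_distrib, ha, hb, P, ← mul_sum]; ring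
  have hD_le : D / 2 ≤ √(1 - P ^ 2) := by
    refine (le_abs_self _).trans (Real.abs_le_sqrt ?_)
    rw [hplus, hminus] at hD
    linarith
  linarith

lemma one_sub_sqrt_sub_le_sq_div {ε : ℝ} (hε : 0 ≤ ε) :
    1 - √(2 * ε) - 2 * ε ≤ (1 - ε) ^ 2 / (1 + √(2 * ε)) := by
  have hs := Real.sq_sqrt (by positivity : 0 ≤ 2 * ε)
  rw [le_div_iff₀ (by positivity)]
  nlinarith [Real.sqrt_nonneg (2 * ε)]

theorem one_sub_sqrt_sub_le_sum_inner_sq_div_max {ι E : Type*} [Fintype ι]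
    [NormedAddCommGroup E] [InnerProductSpace ℝ E] {ε : ℝ} (hε0 : 0 ≤ ε) (hε1 : ε ≤ 1)
    {u v : ι → E} (hu0 : ∀ i, u i ≠ 0) (hu : ∑ i, ‖u i‖ ^ 2 = 1) (hv : ∑ i, ‖v i‖ ^ 2 = 1)
    (hsum : 1 - ε ≤ ∑ i, ⟪u i, v i⟫) :
    1 - √(2 * ε) - 2 * ε ≤ ∑ i, ⟪u i, v i⟫ ^ 2 / max (‖u i‖ ^ 2) (‖v i‖ ^ 2) := by
  have hnorms : 1 - ε ≤ ∑ i, ‖u i‖ * ‖v i‖ :=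
    hsum.trans (sum_le_sum fun i _ => real_inner_le_norm _ _)
  have hmax : ∑ i, max (‖u i‖ ^ 2) (‖v i‖ ^ 2) ≤ 1 + √(2 * ε) := by
    refine (sum_max_sq_le hu hv).trans ?_
    gcongr
    nlinarith
  have hmax_pos : ∀ i ∈ univ, 0 < max (‖u i‖ ^ 2) (‖v i‖ ^ 2) := fun i _ =>
    lt_max_of_lt_left (by positivity [hu0 i])
  calc 1 - √(2 * ε) - 2 * ε ≤ (1 - ε) ^ 2 / (1 + √(2 * ε)) := one_sub_sqrt_sub_le_sq_div hε0
    _ ≤ (∑ i, ⟪u i, v i⟫) ^ 2 / ∑ i, max (‖u i‖ ^ 2) (‖v i‖ ^ 2) := by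
      have hι : (univ : Finset ι).Nonempty := nonempty_of_sum_ne_zero (hu.trans_ne one_ne_zero)
      have h1ε : 0 ≤ 1 - ε := sub_nonneg.2 hε1
      gcongr
      exact sum_pos hmax_pos hι
    _ ≤ _ := sq_sum_div_le_sum_sq_div _ _ hmax_pos

theorem bipartite_sdp_rounding_general (k n : ℕ)
    (ε : ℝ) (hε0 : 0 ≤ ε) (hε1 : ε ≤ 1)
    (u v : Fin k → EuclideanSpace ℝ (Fin n))
    (hu0 : ∀ i, u i ≠ 0) (hv0 : ∀ i, v i ≠ 0)
    (hu : ∑ i, ‖u i‖ ^ 2 = 1) (hv : ∑ i, ‖v i‖ ^ 2 = 1)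
    (hsum : ∑ i, ⟪u i, v i⟫ ≥ 1 - ε) :
    ∑ i, (⟪u i, v i⟫ ^ 2 / (‖u i‖ ^ 2 * ‖v i‖ ^ 2)) * min (‖u i‖ ^ 2) (‖v i‖ ^ 2)
      ≥ 1 - Real.sqrt (2 * ε) - 2 * ε := by
  have hterm : ∀ i, (⟪u i, v i⟫ ^ 2 / (‖u i‖ ^ 2 * ‖v i‖ ^ 2)) * min (‖u i‖ ^ 2) (‖v i‖ ^ 2)
      = ⟪u i, v i⟫ ^ 2 / max (‖u i‖ ^ 2) (‖v i‖ ^ 2) := fun i =>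
    div_mul_min_eq_div_max (by simpa using hu0 i) (by simpa using hv0 i) _
  rw [ge_iff_le, sum_congr rfl fun i _ => hterm i]
  exact one_sub_sqrt_sub_le_sum_inner_sq_div_max hε0 hε1 hu0 hu hv hsum

/-- Under only the bipartite SDP constraints `∑ ‖u i‖² = ∑ ‖v i‖² = 1`, if
`∑ ⟪u i, v i⟫ ≥ 1 − ε` then the rounding success quantity
`∑ (⟪u i, v i⟫²/(‖u i‖²·‖v i‖²))·min(‖u i‖², ‖v i‖²)` is at least `1 − √(2ε) − 2ε`. -/
theorem bipartite_sdp_rounding (k n : ℕ) (hk : 1 ≤ k) (hn : 1 ≤ n)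
    (ε : ℝ) (hε0 : 0 ≤ ε) (hε1 : ε ≤ 1)
    (u v : Fin k → EuclideanSpace ℝ (Fin n))
    (hu0 : ∀ i, u i ≠ 0) (hv0 : ∀ i, v i ≠ 0)
    (hu : ∑ i, ‖u i‖ ^ 2 = 1) (hv : ∑ i, ‖v i‖ ^ 2 = 1)
    (hsum : ∑ i, ⟪u i, v i⟫ ≥ 1 - ε) :
    ∑ i, (⟪u i, v i⟫ ^ 2 / (‖u i‖ ^ 2 * ‖v i‖ ^ 2)) * min (‖u i‖ ^ 2) (‖v i‖ ^ 2)
      ≥ 1 - Real.sqrt (2 * ε) - 2 * ε :=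
  bipartite_sdp_rounding_general k n ε hε0 hε1 u v hu0 hv0 hu hv hsum
end

section
/- Let d ≥ 2 and k ≥ 1, let V be a finite set of pairs in Fin k × Fin k such that for each i the set {j | (i,j) ∈ V} has at most d elements and for each j the set {i | (i,j) ∈ V} has at most d elements. Let a : Fin k → Fin k → ℝ be nonnegative with a i j = 0 whenever (i,j) ∉ V and Σ_{(i,j) ∈ V} a i j = 1. Then Σ_{(i,j) ∈ V} (a i j)² / max(Σ_{i'} a i' j, Σ_{j'} a i j') ≥ 1/(10(d−1)), where a term with a i j = 0 is interpreted as 0. -/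
/-!
Write `M (i, j)` for the larger of the two marginals of `a` at `(i, j)`. Since every row and
every column of `V` has at most `d` cells, summing either marginal over `V` counts each
`a i j` at most `d` times, so `∑_V M ≤ 2d`. Cauchy–Schwarz in Sedrakyan's form then gives
`∑_V a² / M ≥ (∑_V a)² / ∑_V M ≥ 1 / (2d)`, and `2d ≤ 10(d − 1)` for `d ≥ 2`.
-/

open Finset

theorem Finset.sq_sum_div_le_sum_sq_div_of_nonneg {ι R : Type*} [Semifield R] [LinearOrder R]
    [IsStrictOrderedRing R] [ExistsAddOfLE R] (s : Finset ι) {f g : ι → R}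
    (hg : ∀ i ∈ s, 0 ≤ g i) (hfg : ∀ i ∈ s, g i = 0 → f i = 0) :
    (∑ i ∈ s, f i) ^ 2 / ∑ i ∈ s, g i ≤ ∑ i ∈ s, f i ^ 2 / g i := by
  have hterm : ∀ i ∈ s, 0 ≤ f i ^ 2 / g i := fun i hi ↦ div_nonneg (sq_nonneg _) (hg i hi)
  refine div_le_of_le_mul₀ (sum_nonneg hg) (sum_nonneg hterm)
    (sum_sq_le_sum_mul_sum_of_sq_le_mul _ hterm hg fun i hi ↦ ?_)
  obtain hgi | hgi := eq_or_ne (g i) 0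
  · simp [hfg i hi hgi]
  · rw [div_mul_cancel₀ _ hgi]

theorem Finset.sum_comp_le_mul_sum_of_card_fiber_le {α β R : Type*} [Fintype β]
    [DecidableEq β] [CommSemiring R] [PartialOrder R] [IsOrderedRing R]
    (s : Finset α) (g : α → β) {f : β → R}
    (hf : ∀ b, 0 ≤ f b) {d : ℕ} (hfiber : ∀ b, #{x ∈ s | g x = b} ≤ d) :
    ∑ x ∈ s, f (g x) ≤ d * ∑ b, f b := by
  rw [← sum_fiberwise' s g f, mul_sum]
  gcongr with b
  rw [sum_const, nsmul_eq_mul]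
  exact mul_le_mul_of_nonneg_right (Nat.mono_cast (hfiber b)) (hf b)

theorem sum_max_marginals_le {ι κ : Type*} [Fintype ι] [Fintype κ] [DecidableEq ι]
    [DecidableEq κ] (V : Finset (ι × κ)) {d : ℕ}
    (hrow : ∀ i, #{p ∈ V | p.1 = i} ≤ d) (hcol : ∀ j, #{p ∈ V | p.2 = j} ≤ d)
    {a : ι → κ → ℝ} (ha0 : ∀ i j, 0 ≤ a i j) (htotal : ∑ i, ∑ j, a i j = 1) :
    ∑ p ∈ V, max (∑ i', a i' p.2) (∑ j', a p.1 j') ≤ 2 * d := by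
  have hcolsum : ∑ p ∈ V, ∑ i', a i' p.2 ≤ d := by
    simpa [sum_comm (s := univ (α := κ)), htotal] using
      sum_comp_le_mul_sum_of_card_fiber_le V Prod.snd (f := fun j ↦ ∑ i, a i j)
        (fun j ↦ sum_nonneg fun i _ ↦ ha0 i j) hcol
  have hrowsum : ∑ p ∈ V, ∑ j', a p.1 j' ≤ d := by
    simpa [htotal] using
      sum_comp_le_mul_sum_of_card_fiber_le V Prod.fst (f := fun i ↦ ∑ j, a i j)
        (fun i ↦ sum_nonneg fun j _ ↦ ha0 i j) hrow
  calc ∑ p ∈ V, max (∑ i', a i' p.2) (∑ j', a p.1 j')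
      ≤ ∑ p ∈ V, ((∑ i', a i' p.2) + ∑ j', a p.1 j') :=
        sum_le_sum fun p _ ↦ max_le_add_of_nonneg (sum_nonneg fun i _ ↦ ha0 i p.2)
          (sum_nonneg fun j _ ↦ ha0 p.1 j)
    _ ≤ 2 * d := by rw [sum_add_distrib]; linarith

theorem d_to_d_rounding_general (d k : ℕ) (hd : 2 ≤ d)
    (V : Finset (Fin k × Fin k))
    (hrow : ∀ i : Fin k, (V.filter (fun p => p.1 = i)).card ≤ d)
    (hcol : ∀ j : Fin k, (V.filter (fun p => p.2 = j)).card ≤ d)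
    (a : Fin k → Fin k → ℝ)
    (ha0 : ∀ i j, 0 ≤ a i j)
    (hsupp : ∀ i j, (i, j) ∉ V → a i j = 0)
    (hsum : ∑ p ∈ V, a p.1 p.2 = 1) :
    ∑ p ∈ V, (a p.1 p.2) ^ 2 / max (∑ i', a i' p.2) (∑ j', a p.1 j')
      ≥ 1 / (10 * ((d : ℝ) - 1)) := by
  set M : Fin k × Fin k → ℝ := fun p ↦ max (∑ i', a i' p.2) (∑ j', a p.1 j')
  have ha_le_M : ∀ p, a p.1 p.2 ≤ M p := fun p ↦
    (single_le_sum (fun j _ ↦ ha0 p.1 j) (mem_univ p.2)).trans (le_max_right _ _)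
  have htotal : ∑ i, ∑ j, a i j = 1 := by
    rw [← Fintype.sum_prod_type', ← hsum]
    exact (sum_subset (subset_univ V) fun p _ hp ↦ hsupp p.1 p.2 hp).symm
  have hM : ∑ p ∈ V, M p ≤ 2 * d := sum_max_marginals_le V hrow hcol ha0 htotal
  have hM_pos : 0 < ∑ p ∈ V, M p := one_pos.trans_le (hsum ▸ sum_le_sum fun p _ ↦ ha_le_M p)
  have hd' : (2 : ℝ) ≤ d := by exact_mod_cast hd
  calc 1 / (10 * ((d : ℝ) - 1)) ≤ 1 / (2 * d) :=
        one_div_le_one_div_of_le (by positivity) (by linarith)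
    _ ≤ 1 / ∑ p ∈ V, M p := one_div_le_one_div_of_le hM_pos hM
    _ = (∑ p ∈ V, a p.1 p.2) ^ 2 / ∑ p ∈ V, M p := by rw [hsum, one_pow]
    _ ≤ ∑ p ∈ V, (a p.1 p.2) ^ 2 / M p :=
      sq_sum_div_le_sum_sq_div_of_nonneg V (fun p _ ↦ (ha0 _ _).trans (ha_le_M p))
        fun p _ hMp ↦ le_antisymm (hMp ▸ ha_le_M p) (ha0 _ _)

/-- Combinatorial core of the `d`-to-`d` games theorem: if a probability
distribution `a` on `Fin k × Fin k` is supported on a set `V` with all rows and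
columns of size at most `d`, then
`∑_{(i,j)∈V} a i j² / max(∑_{i'} a i' j, ∑_{j'} a i j') ≥ 1/(10(d−1))`. -/
theorem d_to_d_rounding (d k : ℕ) (hd : 2 ≤ d) (hk : 1 ≤ k)
    (V : Finset (Fin k × Fin k))
    (hrow : ∀ i : Fin k, (V.filter (fun p => p.1 = i)).card ≤ d)
    (hcol : ∀ j : Fin k, (V.filter (fun p => p.2 = j)).card ≤ d)
    (a : Fin k → Fin k → ℝ)
    (ha0 : ∀ i j, 0 ≤ a i j)
    (hsupp : ∀ i j, (i, j) ∉ V → a i j = 0)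
    (hsum : ∑ p ∈ V, a p.1 p.2 = 1) :
    ∑ p ∈ V, (a p.1 p.2) ^ 2 / max (∑ i', a i' p.2) (∑ j', a p.1 j')
      ≥ 1 / (10 * ((d : ℝ) - 1)) :=
  d_to_d_rounding_general d k hd V hrow hcol a ha0 hsupp hsum
end

section
/- Let Q be a finite type (the question set), k ≥ 1 and d ≥ 1. Let ψ ∈ EuclideanSpace ℂ (Fin d × Fin d) be a unit vector. Let A : Q → Fin k → Matrix (Fin d) (Fin d) ℂ and B : Q → Fin k → Matrix (Fin d) (Fin d) ℂ be such that for every s and a, A s a is an orthogonal projection (Hermitian and idempotent) with Σₐ A s a = 1, and similarly for every t and b, B t b is an orthogonal projection with Σ_b B t b = 1. Then there exist N ≥ 1, vectors u : Q → Fin k → EuclideanSpace ℝ (Fin N), v : Q → Fin k → EuclideanSpace ℝ (Fin N), and z ∈ EuclideanSpace ℝ (Fin N) such that: ‖z‖ = 1; Σₐ u s a = z for every s and Σ_b v t b = z for every t; ⟨u s a, u s a'⟩ = 0 and ⟨v t b, v t b'⟩ = 0 whenever a ≠ a' and b ≠ b'; and for all s, t, a, b, ⟨u s a, v t b⟩ =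 Re ⟨ψ, ((A s a) ⊗ (B t b)) ψ⟩ ≥ 0, where (A s a) ⊗ (B t b) is the Kronecker product acting on EuclideanSpace ℂ (Fin d × Fin d). -/
open Matrix
open scoped Kronecker RealInnerProductSpace

/-!
The vectors are `u s a = (A s a ⊗ 1) ψ`, `v t b = (1 ⊗ B t b) ψ` and `z = ψ`, in `ℂ^(d × d)` viewed
as a real inner product space with `⟪x, y⟫_ℝ = re ⟪x, y⟫_ℂ`. Everything follows from
`⟪M ψ, M' ψ⟫ = ⟪ψ, Mᴴ M' ψ⟫`: as `(A ⊗ 1)(1 ⊗ B) = A ⊗ B` is again a projection, `⟪u, v⟫` is the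
squared norm of `(A ⊗ B) ψ`; and the vectors of one measurement are orthogonal because
projections summing to `1` are pairwise orthogonal.
-/

theorem IsStarProjection.mul_eq_zero_of_sum_eq_one {A ι : Type*} [CStarAlgebra A]
    [PartialOrder A] [StarOrderedRing A] [Fintype ι] [DecidableEq ι] {P : ι → A}
    (hP : ∀ i, IsStarProjection (P i)) (hsum : ∑ i, P i = 1) {i j : ι} (hij : i ≠ j) :
    P i * P j = 0 := by
  have hle : P j ≤ 1 - P i := by
    rw [← hsum, ← Finset.add_sum_erase _ _ (Finset.mem_univ i), add_sub_cancel_left]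
    exact Finset.single_le_sum (fun l _ => (hP l).nonneg)
      (Finset.mem_erase.2 ⟨hij.symm, Finset.mem_univ j⟩)
  have := ((hP i).one_sub.mul_right_and_mul_left_of_nonneg_of_le (hP j).nonneg hle).2
  rwa [sub_mul, one_mul, sub_eq_self] at this

theorem exists_linearIsometry_euclideanSpace_real (E : Type*) [NormedAddCommGroup E]
    [InnerProductSpace ℂ E] [FiniteDimensional ℂ E] [Nontrivial E] :
    ∃ N, 1 ≤ N ∧ ∃ f : E →ₗᵢ[ℝ] EuclideanSpace ℝ (Fin N),
      ∀ x y, ⟪f x, f y⟫ = (inner ℂ x y).re := by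
  let := InnerProductSpace.complexToReal (G := E)
  refine ⟨Module.finrank ℝ E, Module.finrank_pos,
    (stdOrthonormalBasis ℝ E).repr.toLinearIsometry, fun x y => ?_⟩
  rw [LinearIsometry.inner_map_map]
  rfl

namespace Matrix

theorem sum_kronecker {ι l m n p α : Type*} [Fintype ι] [NonUnitalNonAssocSemiring α]
    (A : ι → Matrix l m α) (B : Matrix n p α) : (∑ i, A i) ⊗ₖ B = ∑ i, A i ⊗ₖ B := by
  ext ⟨i, j⟩ ⟨k, l⟩
  simp [Matrix.sum_apply, Finset.sum_mul]

theorem kronecker_sum {ι l m n p α : Type*} [Fintype ι] [NonUnitalNonAssocSemiring α]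
    (A : Matrix l m α) (B : ι → Matrix n p α) : A ⊗ₖ (∑ i, B i) = ∑ i, A ⊗ₖ B i := by
  ext ⟨i, j⟩ ⟨k, l⟩
  simp [Matrix.sum_apply, Finset.mul_sum]

variable {n : Type*} [Fintype n] [DecidableEq n]

theorem inner_toEuclideanLin_toEuclideanLin (M M' : Matrix n n ℂ) (x : EuclideanSpace ℂ n) :
    inner ℂ (M.toEuclideanLin x) (M'.toEuclideanLin x) =
      inner ℂ x ((Mᴴ * M').toEuclideanLin x) := by
  rw [← LinearMap.adjoint_inner_right, ← toEuclideanLin_conjTranspose_eq_adjoint]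
  congr 1
  ext i
  simp [mulVec_mulVec]

end Matrix

namespace IsStarProjection

theorem kronecker {m n : Type*} [Fintype m] [Fintype n] {P : Matrix m m ℂ} {Q : Matrix n n ℂ}
    (hP : IsStarProjection P) (hQ : IsStarProjection Q) : IsStarProjection (P ⊗ₖ Q) where
  isIdempotentElem := by
    rw [IsIdempotentElem, ← mul_kronecker_mul, hP.isIdempotentElem.eq, hQ.isIdempotentElem.eq]
  isSelfAdjoint := by
    rw [IsSelfAdjoint, star_eq_conjTranspose, conjTranspose_kronecker, ← star_eq_conjTranspose,
      ← star_eq_conjTranspose, hP.isSelfAdjoint.star_eq, hQ.isSelfAdjoint.star_eq]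

variable {n : Type*} [Fintype n] [DecidableEq n]

theorem inner_toEuclideanLin {P : Matrix n n ℂ} (hP : IsStarProjection P) (M : Matrix n n ℂ)
    (x : EuclideanSpace ℂ n) :
    inner ℂ (P.toEuclideanLin x) (M.toEuclideanLin x) = inner ℂ x ((P * M).toEuclideanLin x) := by
  rw [inner_toEuclideanLin_toEuclideanLin, ← star_eq_conjTranspose, hP.isSelfAdjoint.star_eq]

theorem re_inner_toEuclideanLin_nonneg {P : Matrix n n ℂ} (hP : IsStarProjection P)
    (x : EuclideanSpace ℂ n) : 0 ≤ (inner ℂ x (P.toEuclideanLin x)).re := by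
  rw [← hP.isIdempotentElem.eq, ← hP.inner_toEuclideanLin]
  exact inner_self_nonneg (𝕜 := ℂ)

end IsStarProjection

structure Matrix.IsProjectiveMeasurement {ι n : Type*} [Fintype ι] [Fintype n] [DecidableEq n]
    (P : ι → Matrix n n ℂ) : Prop where
  isStarProjection : ∀ i, IsStarProjection (P i)
  sum_eq_one : ∑ i, P i = 1

namespace Matrix.IsProjectiveMeasurement

variable {ι n : Type*} [Fintype ι] [Fintype n] [DecidableEq n] {P : ι → Matrix n n ℂ}

theorem kronecker_one {m : Type*} [Fintype m] [DecidableEq m] (hP : IsProjectiveMeasurement P) :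
    IsProjectiveMeasurement fun i => P i ⊗ₖ (1 : Matrix m m ℂ) where
  isStarProjection i := (hP.isStarProjection i).kronecker (.one _)
  sum_eq_one := by rw [← sum_kronecker, hP.sum_eq_one, one_kronecker_one]

theorem one_kronecker {m : Type*} [Fintype m] [DecidableEq m] (hP : IsProjectiveMeasurement P) :
    IsProjectiveMeasurement fun i => (1 : Matrix m m ℂ) ⊗ₖ P i where
  isStarProjection i := (IsStarProjection.one _).kronecker (hP.isStarProjection i)
  sum_eq_one := by rw [← kronecker_sum, hP.sum_eq_one, one_kronecker_one]

open scoped Matrix.Norms.L2Operator MatrixOrder in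
theorem mul_eq_zero [DecidableEq ι] (hP : IsProjectiveMeasurement P) {i j : ι} (hij : i ≠ j) :
    P i * P j = 0 :=
  IsStarProjection.mul_eq_zero_of_sum_eq_one hP.isStarProjection hP.sum_eq_one hij

theorem sum_toEuclideanLin (hP : IsProjectiveMeasurement P) (x : EuclideanSpace ℂ n) :
    ∑ i, (P i).toEuclideanLin x = x := by
  rw [← LinearMap.sum_apply, ← map_sum, hP.sum_eq_one]
  simp

theorem inner_toEuclideanLin_eq_zero [DecidableEq ι] (hP : IsProjectiveMeasurement P) {i j : ι}
    (hij : i ≠ j) (x : EuclideanSpace ℂ n) :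
    inner ℂ ((P i).toEuclideanLin x) ((P j).toEuclideanLin x) = 0 := by
  rw [(hP.isStarProjection i).inner_toEuclideanLin, hP.mul_eq_zero hij]
  simp

end Matrix.IsProjectiveMeasurement

theorem strategy_to_sdp_solution_general (Q : Type*) [Fintype Q] (k d : ℕ)
    (ψ : EuclideanSpace ℂ (Fin d × Fin d)) (hψ : ‖ψ‖ = 1)
    (A B : Q → Fin k → Matrix (Fin d) (Fin d) ℂ)
    (hAherm : ∀ s a, (A s a).IsHermitian)
    (hAidem : ∀ s a, A s a * A s a = A s a)
    (hAsum : ∀ s, ∑ a, A s a = 1)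
    (hBherm : ∀ t b, (B t b).IsHermitian)
    (hBidem : ∀ t b, B t b * B t b = B t b)
    (hBsum : ∀ t, ∑ b, B t b = 1) :
    ∃ N : ℕ, 1 ≤ N ∧
      ∃ (u v : Q → Fin k → EuclideanSpace ℝ (Fin N)) (z : EuclideanSpace ℝ (Fin N)),
        ‖z‖ = 1 ∧
        (∀ s, ∑ a, u s a = z) ∧ (∀ t, ∑ b, v t b = z) ∧
        (∀ s a a', a ≠ a' → ⟪u s a, u s a'⟫ = 0) ∧
        (∀ t b b', b ≠ b' → ⟪v t b, v t b'⟫ = 0) ∧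
        (∀ s t a b,
          ⟪u s a, v t b⟫ =
            (@inner ℂ _ _ ψ ((EuclideanSpace.equiv (Fin d × Fin d) ℂ).symm
                (((A s a) ⊗ₖ (B t b)) *ᵥ (EuclideanSpace.equiv (Fin d × Fin d) ℂ ψ)))).re
          ∧ 0 ≤ ⟪u s a, v t b⟫) := by
  have hA s : IsProjectiveMeasurement (A s) :=
    ⟨fun a => ⟨hAidem s a, (hAherm s a).isSelfAdjoint⟩, hAsum s⟩
  have hB t : IsProjectiveMeasurement (B t) :=
    ⟨fun b => ⟨hBidem t b, (hBherm t b).isSelfAdjoint⟩, hBsum t⟩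
  have : Nontrivial (EuclideanSpace ℂ (Fin d × Fin d)) :=
    nontrivial_of_ne ψ 0 (by rintro rfl; simp at hψ)
  obtain ⟨N, hN, f, hf⟩ :=
    exists_linearIsometry_euclideanSpace_real (EuclideanSpace ℂ (Fin d × Fin d))
  refine ⟨N, hN, fun s a => f ((A s a ⊗ₖ 1).toEuclideanLin ψ),
    fun t b => f ((1 ⊗ₖ B t b).toEuclideanLin ψ), f ψ, by rw [f.norm_map, hψ],
    fun s => by rw [← map_sum, (hA s).kronecker_one.sum_toEuclideanLin],
    fun t => by rw [← map_sum, (hB t).one_kronecker.sum_toEuclideanLin],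
    fun s a a' h => by
      rw [hf, (hA s).kronecker_one.inner_toEuclideanLin_eq_zero h, Complex.zero_re],
    fun t b b' h => by
      rw [hf, (hB t).one_kronecker.inner_toEuclideanLin_eq_zero h, Complex.zero_re],
    fun s t a b => ?_⟩
  have hAB : ⟪f ((A s a ⊗ₖ 1).toEuclideanLin ψ), f ((1 ⊗ₖ B t b).toEuclideanLin ψ)⟫ =
      (inner ℂ ψ ((A s a ⊗ₖ B t b).toEuclideanLin ψ)).re := by
    rw [hf, ((hA s).kronecker_one.isStarProjection a).inner_toEuclideanLin, ← mul_kronecker_mul,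
      mul_one, one_mul]
  exact ⟨hAB, hAB ▸ (((hA s).isStarProjection a).kronecker
    ((hB t).isStarProjection b)).re_inner_toEuclideanLin_nonneg ψ⟩

/-- Every projective-measurement strategy for two entangled provers yields a
feasible solution of the SDP relaxation with matching inner products. -/
theorem strategy_to_sdp_solution (Q : Type*) [Fintype Q] (k d : ℕ)
    (hk : 1 ≤ k) (hd : 1 ≤ d)
    (ψ : EuclideanSpace ℂ (Fin d × Fin d)) (hψ : ‖ψ‖ = 1)
    (A B : Q → Fin k → Matrix (Fin d) (Fin d) ℂ)
    (hAherm : ∀ s a, (A s a).IsHermitian)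
    (hAidem : ∀ s a, A s a * A s a = A s a)
    (hAsum : ∀ s, ∑ a, A s a = 1)
    (hBherm : ∀ t b, (B t b).IsHermitian)
    (hBidem : ∀ t b, B t b * B t b = B t b)
    (hBsum : ∀ t, ∑ b, B t b = 1) :
    ∃ N : ℕ, 1 ≤ N ∧
      ∃ (u v : Q → Fin k → EuclideanSpace ℝ (Fin N)) (z : EuclideanSpace ℝ (Fin N)),
        ‖z‖ = 1 ∧
        (∀ s, ∑ a, u s a = z) ∧ (∀ t, ∑ b, v t b = z) ∧
        (∀ s a a', a ≠ a' → ⟪u s a, u s a'⟫ = 0) ∧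
        (∀ t b b', b ≠ b' → ⟪v t b, v t b'⟫ = 0) ∧
        (∀ s t a b,
          ⟪u s a, v t b⟫ =
            (@inner ℂ _ _ ψ ((EuclideanSpace.equiv (Fin d × Fin d) ℂ).symm
                (((A s a) ⊗ₖ (B t b)) *ᵥ (EuclideanSpace.equiv (Fin d × Fin d) ℂ ψ)))).re
          ∧ 0 ≤ ⟪u s a, v t b⟫) :=
  strategy_to_sdp_solution_general Q k d ψ hψ A B hAherm hAidem hAsum hBherm hBidem hBsum
end

section
/- Let m ≥ 1 and 0 ≤ ε ≤ 1, and set k = 2m, a = √((1−ε)/k), b = √(2ε/k). Let E be a real inner product space and let e : Fin k → E and f : Fin m → E be vectors such that the combined family is orthonormal: ‖e i‖ = 1, ‖f j‖ = 1, ⟨e i, e i'⟩ = 0 for i ≠ i', ⟨f j, f j'⟩ = 0 for j ≠ j', and ⟨e i, f j⟩ = 0 for all i, j. Define u, v : Fin k → E by: for i with i.val < m, u i = a • e i + b • f ⟨i.val, _⟩ and v i = a • e i; for i with i.val ≥ m, u i = a • e i and v i = a • e i + b • f ⟨i.val − m, _⟩. Then: (i) ⟨u i, u j⟩ = 0 and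 ⟨v i, v j⟩ = 0 for i ≠ j; (ii) Σᵢ u i = Σᵢ v i and ‖Σᵢ u i‖ = 1; (iii) ⟨u i, v j⟩ ≥ 0 for all i, j; and (iv) Σᵢ ⟨u i, v i⟩ = 1 − ε. -/
open scoped RealInnerProductSpace

/-!
Split the `2m` indices into two copies of `Fin m`. Then `u i = a • e i + b • g ((s i).swap)` and
`v i = a • e i + b • g (s i)`, where `s : Fin (2m) ≃ Fin m ⊕ Fin m` and `g = Sum.elim 0 f`. The
family `g` is pairwise orthogonal and orthogonal to `e`, so every inner product of these vectors
is `a² ⟪e i, e j⟫ + b² ⟪g x, g y⟫`, a sum of two nonnegative terms that vanish off the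
diagonal. Since `(s i).swap ≠ s i`, the objective is `2m a² = 1 - ε`, and both families sum
to `a • ∑ e + b • ∑ f`, of squared norm `2m a² + m b² = 1`.
-/

theorem sqrt_div_mul_self_mul {x c : ℝ} (hx : 0 ≤ x) (hc : 0 < c) :
    √(x / c) * √(x / c) * c = x := by
  rw [Real.mul_self_sqrt (div_nonneg hx hc.le), div_mul_cancel₀ x hc.ne']

section InnerProduct

variable {E : Type*} [NormedAddCommGroup E] [InnerProductSpace ℝ E]

theorem inner_smul_add_smul_of_inner_eq_zero (a b a' b' : ℝ) {x y x' y' : E}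
    (hxy' : ⟪x, y'⟫ = 0) (hyx' : ⟪y, x'⟫ = 0) :
    ⟪a • x + b • y, a' • x' + b' • y'⟫ = a * a' * ⟪x, x'⟫ + b * b' * ⟪y, y'⟫ := by
  simp only [inner_add_left, inner_add_right, real_inner_smul_left, real_inner_smul_right,
    hxy', hyx']
  ring

theorem inner_nonneg_of_pairwise_inner_eq_zero {ι : Type*} {v : ι → E}
    (hv : Pairwise fun i j => ⟪v i, v j⟫ = 0) (i j : ι) : 0 ≤ ⟪v i, v j⟫ := by
  rcases eq_or_ne i j with rfl | hij
  · exact real_inner_self_nonneg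
  · exact (hv hij).ge

theorem Orthonormal.inner_sum_self {ι : Type*} [Fintype ι] {v : ι → E}
    (hv : Orthonormal ℝ v) : ⟪∑ i, v i, ∑ i, v i⟫ = Fintype.card ι := by
  simpa using hv.inner_sum 1 1 Finset.univ

theorem pairwise_inner_sumElim_zero {κ' κ : Type*} {f : κ → E}
    (hf : Pairwise fun i j => ⟪f i, f j⟫ = 0) :
    Pairwise fun x y => ⟪Sum.elim (0 : κ' → E) f x, Sum.elim 0 f y⟫ = 0 := by
  rintro (_ | i) (_ | j) hxy <;> simp only [Sum.elim_inl, Sum.elim_inr, Pi.zero_apply,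
    inner_zero_left, inner_zero_right]
  exact hf (ne_of_apply_ne Sum.inr hxy)

end InnerProduct

def finSplit (m : ℕ) : Fin (2 * m) ≃ Fin m ⊕ Fin m :=
  (finCongr (two_mul m)).trans finSumFinEquiv.symm

theorem finSplit_of_val_eq {m : ℕ} {i : Fin (2 * m)} {k : Fin m} (hk : (i : ℕ) = k) :
    finSplit m i = .inl k := by
  rw [finSplit, Equiv.trans_apply, show finCongr (two_mul m) i = Fin.castAdd m k from Fin.ext hk,
    finSumFinEquiv_symm_apply_castAdd]

theorem finSplit_of_val_eq_add {m : ℕ} {i : Fin (2 * m)} {k : Fin m} (hk : (i : ℕ) = m + k) :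
    finSplit m i = .inr k := by
  rw [finSplit, Equiv.trans_apply, show finCongr (two_mul m) i = Fin.natAdd m k from Fin.ext hk,
    finSumFinEquiv_symm_apply_natAdd]

section TightVec

variable {ι κ E : Type*} [NormedAddCommGroup E] [InnerProductSpace ℝ E]

def tightVec (a b : ℝ) (e : ι → E) (f : κ → E) (i : ι) (x : κ ⊕ κ) : E :=
  a • e i + b • Sum.elim (0 : κ → E) f x

variable {a b : ℝ} {e : ι → E} {f : κ → E}

theorem inner_tightVec (hef : ∀ i j, ⟪e i, f j⟫ = 0) (i j : ι) (x y : κ ⊕ κ) :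
    ⟪tightVec a b e f i x, tightVec a b e f j y⟫ =
      a * a * ⟪e i, e j⟫ + b * b * ⟪Sum.elim (0 : κ → E) f x, Sum.elim 0 f y⟫ := by
  have hfe : ∀ i j, ⟪f j, e i⟫ = 0 := fun i j => by rw [real_inner_comm, hef]
  refine inner_smul_add_smul_of_inner_eq_zero a b a b ?_ ?_
  · cases y <;> simp [hef]
  · cases x <;> simp [hfe]

variable (he : Orthonormal ℝ e) (hf : Orthonormal ℝ f) (hef : ∀ i j, ⟪e i, f j⟫ = 0)
include he hf hef

theorem inner_tightVec_eq_zero {i j : ι} {x y : κ ⊕ κ} (hij : i ≠ j) (hxy : x ≠ y) :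
    ⟪tightVec a b e f i x, tightVec a b e f j y⟫ = 0 := by
  rw [inner_tightVec hef, he.2 hij, pairwise_inner_sumElim_zero hf.2 hxy]
  ring

theorem inner_tightVec_nonneg (i j : ι) (x y : κ ⊕ κ) :
    0 ≤ ⟪tightVec a b e f i x, tightVec a b e f j y⟫ := by
  rw [inner_tightVec hef]
  exact add_nonneg
    (mul_nonneg (mul_self_nonneg a) (inner_nonneg_of_pairwise_inner_eq_zero he.2 i j))
    (mul_nonneg (mul_self_nonneg b)
      (inner_nonneg_of_pairwise_inner_eq_zero (pairwise_inner_sumElim_zero hf.2) x y))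

theorem inner_tightVec_swap (i : ι) (x : κ ⊕ κ) :
    ⟪tightVec a b e f i x.swap, tightVec a b e f i x⟫ = a * a := by
  have hx : x.swap ≠ x := by cases x <;> simp
  rw [inner_tightVec hef, real_inner_self_eq_norm_sq, he.1,
    pairwise_inner_sumElim_zero hf.2 hx]
  ring

omit he hf hef in
theorem sum_tightVec [Fintype ι] [Fintype κ] (σ : ι ≃ κ ⊕ κ) :
    ∑ i, tightVec a b e f i (σ i) = a • ∑ i, e i + b • ∑ k, f k := by
  simp only [tightVec, Finset.sum_add_distrib, ← Finset.smul_sum,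
    Equiv.sum_comp σ (Sum.elim (0 : κ → E) f), Fintype.sum_sum_type, Sum.elim_inl, Sum.elim_inr,
    Pi.zero_apply, Finset.sum_const_zero, zero_add]

theorem norm_smul_sum_add_smul_sum_sq [Fintype ι] [Fintype κ] :
    ‖a • ∑ i, e i + b • ∑ k, f k‖ ^ 2 =
      a * a * Fintype.card ι + b * b * Fintype.card κ := by
  have hef_sum : ⟪∑ i, e i, ∑ k, f k⟫ = 0 := by simp [sum_inner, inner_sum, hef]
  have hfe_sum : ⟪∑ k, f k, ∑ i, e i⟫ = 0 := by rw [real_inner_comm, hef_sum]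
  rw [← real_inner_self_eq_norm_sq,
    inner_smul_add_smul_of_inner_eq_zero a b a b hef_sum hfe_sum, he.inner_sum_self,
    hf.inner_sum_self]

end TightVec

section FinSplit

variable {m : ℕ} {E : Type*} [NormedAddCommGroup E] [InnerProductSpace ℝ E] {a b : ℝ}
  {e : Fin (2 * m) → E} {f : Fin m → E}

theorem eq_tightVec_finSplit_swap {u : Fin (2 * m) → E}
    (hu1 : ∀ (i : Fin (2 * m)) (h : (i : ℕ) < m), u i = a • e i + b • f ⟨i, h⟩)
    (hu2 : ∀ i : Fin (2 * m), m ≤ (i : ℕ) → u i = a • e i) :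
    u = fun i => tightVec a b e f i (finSplit m i).swap := by
  funext i
  rcases lt_or_ge (i : ℕ) m with h | h
  · simp [tightVec, hu1 i h, finSplit_of_val_eq (k := ⟨i, h⟩) rfl]
  · have hk : (i : ℕ) = m + (⟨i - m, by omega⟩ : Fin m) := by simp; omega
    simp [tightVec, hu2 i h, finSplit_of_val_eq_add hk]

theorem eq_tightVec_finSplit {v : Fin (2 * m) → E}
    (hv1 : ∀ i : Fin (2 * m), (i : ℕ) < m → v i = a • e i)
    (hv2 : ∀ (i : Fin (2 * m)) (k : Fin m), (i : ℕ) = m + k → v i = a • e i + b • f k) :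
    v = fun i => tightVec a b e f i (finSplit m i) := by
  funext i
  rcases lt_or_ge (i : ℕ) m with h | h
  · simp [tightVec, hv1 i h, finSplit_of_val_eq (k := ⟨i, h⟩) rfl]
  · have hk : (i : ℕ) = m + (⟨i - m, by omega⟩ : Fin m) := by simp; omega
    simp [tightVec, hv2 i _ hk, finSplit_of_val_eq_add hk]

end FinSplit

/-- Local tightness of the quantum rounding analysis: the explicit vector families
`u i = a·e i + b·f i, v i = a·e i` (for `i < m`) and `u i = a·e i, v i = a·e i + b·f (i−m)`
(for `i ≥ m`) satisfy all SDP constraints for one pair of questions and have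
objective value exactly `1 − ε`. -/
theorem rounding_locally_tight (m : ℕ) (hm : 1 ≤ m)
    (ε : ℝ) (hε0 : 0 ≤ ε) (hε1 : ε ≤ 1)
    (a b : ℝ)
    (ha : a = Real.sqrt ((1 - ε) / (2 * m)))
    (hb : b = Real.sqrt (2 * ε / (2 * m)))
    (E : Type*) [NormedAddCommGroup E] [InnerProductSpace ℝ E]
    (e : Fin (2 * m) → E) (f : Fin m → E)
    (he : ∀ i, ‖e i‖ = 1) (hf : ∀ j, ‖f j‖ = 1)
    (hee : ∀ i i', i ≠ i' → ⟪e i, e i'⟫ = 0)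
    (hff : ∀ j j', j ≠ j' → ⟪f j, f j'⟫ = 0)
    (hef : ∀ i j, ⟪e i, f j⟫ = 0)
    (u v : Fin (2 * m) → E)
    (hu1 : ∀ (i : Fin (2 * m)) (h : (i : ℕ) < m), u i = a • e i + b • f ⟨(i : ℕ), h⟩)
    (hu2 : ∀ i : Fin (2 * m), m ≤ (i : ℕ) → u i = a • e i)
    (hv1 : ∀ i : Fin (2 * m), (i : ℕ) < m → v i = a • e i)
    (hv2 : ∀ (i : Fin (2 * m)) (h : m ≤ (i : ℕ)),
      v i = a • e i + b • f ⟨(i : ℕ) - m, by omega⟩) :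
    (∀ i j, i ≠ j → ⟪u i, u j⟫ = 0 ∧ ⟪v i, v j⟫ = 0) ∧
    (∑ i, u i = ∑ i, v i ∧ ‖∑ i, u i‖ = 1) ∧
    (∀ i j, 0 ≤ ⟪u i, v j⟫) ∧
    (∑ i, ⟪u i, v i⟫ = 1 - ε) := by
  have he' : Orthonormal ℝ e := ⟨he, hee⟩
  have hf' : Orthonormal ℝ f := ⟨hf, hff⟩
  obtain rfl := eq_tightVec_finSplit_swap hu1 hu2
  have hv2' : ∀ (i : Fin (2 * m)) (k : Fin m), (i : ℕ) = m + k → v i = a • e i + b • f k := by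
    intro i k hk
    have hk' : (⟨i - m, by omega⟩ : Fin m) = k := Fin.ext (by simp; omega)
    rw [hv2 i (by omega), hk']
  obtain rfl := eq_tightVec_finSplit hv1 hv2'
  have hm' : (0 : ℝ) < 2 * m := by positivity
  have ha2 : a * a * (2 * m) = 1 - ε := ha ▸ sqrt_div_mul_self_mul (by linarith) hm'
  have hb2 : b * b * (2 * m) = 2 * ε := hb ▸ sqrt_div_mul_self_mul (by linarith) hm'
  have hsum_u : ∑ i, tightVec a b e f i (finSplit m i).swap = a • ∑ i, e i + b • ∑ k, f k :=
    sum_tightVec ((finSplit m).trans (Equiv.sumComm _ _))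
  refine ⟨fun i j hij => ⟨?_, ?_⟩, ⟨?_, ?_⟩, fun i j => ?_, ?_⟩
  · exact inner_tightVec_eq_zero he' hf' hef hij
      ((Equiv.sumComm _ _).injective.ne ((finSplit m).injective.ne hij))
  · exact inner_tightVec_eq_zero he' hf' hef hij ((finSplit m).injective.ne hij)
  · exact hsum_u.trans (sum_tightVec (finSplit m)).symm
  · rw [← pow_eq_one_iff_of_nonneg (norm_nonneg _) two_ne_zero, hsum_u,
      norm_smul_sum_add_smul_sum_sq he' hf' hef]
    simp only [Fintype.card_fin, Nat.cast_mul, Nat.cast_ofNat]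
    linarith
  · exact inner_tightVec_nonneg he' hf' hef i j _ _
  · simp only [inner_tightVec_swap he' hf' hef, Finset.sum_const, Finset.card_univ,
      Fintype.card_fin, nsmul_eq_mul, Nat.cast_mul, Nat.cast_ofNat]
    linarith
end
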